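/- Let G be a 3-edge-connected graph with DFS tree T, and let u, v, w be vertices with u a descendant of v and v a descendant of w. Then {(u,p(u)), (v,p(v)), (w,p(w))} is a 3-edge cut of G if and only if B(v) = B(u) ⊔ B(w) (disjoint union). -/

import Mathlib

variable {V E : Type}

/-- Reachability in the multigraph with edge-endpoint map `ends`,
avoiding (i.e. after deleting) the edges in `S`. -/
def Reach (ends : E → V × V) (S : Set E) : V → V → Prop :=
  Relation.ReflTransGen (fun a b => ∃ e, e ∉ S ∧ (ends e = (a, b) ∨ ends e = (b, a)))

/-- The multigraph is connected. -/
def Connected (ends : E → V × V) : Prop := ∀ u v : V, Reach ends ∅ u v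

/-- `u` and `v` are `k`-edge-connected: no set of at most `k - 1` edges separates them. -/
def KConn (ends : E → V × V) (k : ℕ) (u v : V) : Prop :=
  ∀ S : Finset E, S.card ≤ k - 1 → Reach ends (↑S) u v

/-- The multigraph is `k`-edge-connected: no edge cut of size less than `k`. -/
def GraphKConn (ends : E → V × V) (k : ℕ) : Prop :=
  ∀ S : Finset E, S.card < k → ∀ u v : V, Reach ends (↑S) u v

/-- `S` is an edge cut: removing it disconnects the graph. -/
def IsCutSet (ends : E → V × V) (S : Set E) : Prop :=
  ∃ u v : V, ¬ Reach ends S u v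

/-- A (candidate) DFS tree on the multigraph `ends : E → V × V`: a root, a parent
function, a choice of a tree edge for each non-root vertex, and a preorder numbering. -/
structure DFSTree (V E : Type) where
  ends : E → V × V
  root : V
  parent : V → V
  treeEdge : V → E
  pre : V → ℕ

namespace DFSTree

variable (t : DFSTree V E)

/-- `t.Anc a b` : `a` is an ancestor of `b` (every vertex is an ancestor of itself). -/
def Anc (a b : V) : Prop :=
  Relation.ReflTransGen (fun x y => x ≠ t.root ∧ y = t.parent x) b a

/-- `a` is a proper ancestor of `b`. -/
def ProperAnc (a b : V) : Prop := t.Anc a b ∧ a ≠ b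

def IsTreeEdge (e : E) : Prop := ∃ v, v ≠ t.root ∧ e = t.treeEdge v

/-- The set `B(v)`: back-edges `(x, y)` with `x` a descendant of `v` and `y` a
proper ancestor of `v`. -/
def B (v : V) : Set E :=
  {e | ¬ t.IsTreeEdge e ∧ t.Anc v (t.ends e).1 ∧ t.ProperAnc (t.ends e).2 v}

/-- `m` is the nearest common ancestor of the set `S` of vertices. -/
def IsNCA (S : Set V) (m : V) : Prop :=
  (∀ x ∈ S, t.Anc m x) ∧ ∀ m' : V, (∀ x ∈ S, t.Anc m' x) → t.Anc m' m

/-- `m = M(v)`: the nearest common ancestor of all lower ends of back-edges in `B(v)`. -/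
def IsM (v m : V) : Prop := t.IsNCA {x | ∃ e ∈ t.B v, (t.ends e).1 = x} m

/-- `h = high(v)`: the highest (in preorder) upper end of a back-edge in `B(v)`. -/
def IsHigh (v h : V) : Prop :=
  (∃ e ∈ t.B v, (t.ends e).2 = h) ∧ ∀ e ∈ t.B v, t.pre (t.ends e).2 ≤ t.pre h

/-- `l = low(v)`: the lowest (in preorder) upper end of a back-edge in `B(v)`. -/
def IsLow (v l : V) : Prop :=
  (∃ e ∈ t.B v, (t.ends e).2 = l) ∧ ∀ e ∈ t.B v, t.pre l ≤ t.pre (t.ends e).2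

/-- `v` and `w` have the same `M`-value. -/
def SameM (v w : V) : Prop := ∃ m, t.IsM v m ∧ t.IsM w m

/-- `n = nextM(v)`: the greatest vertex smaller than `v` with the same `M`-value. -/
def IsNextM (v n : V) : Prop :=
  t.pre n < t.pre v ∧ t.SameM v n ∧
    ∀ z, t.pre z < t.pre v → t.SameM v z → t.pre z ≤ t.pre n

/-- `l = lastM(v)`: the smallest vertex with the same `M`-value as `v`. -/
def IsLastM (v l : V) : Prop :=
  t.SameM v l ∧ ∀ z, t.SameM v z → t.pre l ≤ t.pre z

/-- `t` really is a DFS spanning tree of the connected multigraph `ends`. -/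
structure IsDFS : Prop where
  conn : Connected t.ends
  parent_root : t.parent t.root = t.root
  tree_ends : ∀ v, v ≠ t.root → t.ends (t.treeEdge v) = (v, t.parent v)
  treeEdge_inj : ∀ v w, v ≠ t.root → w ≠ t.root → t.treeEdge v = t.treeEdge w → v = w
  back : ∀ e, ¬ t.IsTreeEdge e → t.Anc (t.ends e).2 (t.ends e).1
  pre_inj : Function.Injective t.pre
  pre_mono : ∀ a b, t.Anc a b → t.pre a ≤ t.pre b
  pre_interval : ∀ a b : V,
    t.pre a ≤ t.pre b → t.pre b < t.pre a + {x | t.Anc a x}.ncard → t.Anc a b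

end DFSTree


/-!
Write `∂X` for the set of edges with exactly one end in a vertex set `X`, so that
`∂(X ∆ Y) = ∂X ∆ ∂Y`. In a DFS tree every non-tree edge joins a vertex to one of its ancestors,
so the subtree of `x` has `∂ = {(x, p(x))} ∪ B(x)`, and `X := subtree u ∆ subtree v ∆ subtree w`
has `∂X = S ∪ K`, where `S` is the set of the three tree edges and `K := B(u) ∆ B(v) ∆ B(w)`.
As `B(u) ∩ B(w) ⊆ B(v)`, the condition on the `B`-sets says exactly `K = ∅`.

If `K = ∅`, then `∂X = S` and `X` contains `w` but not `v`, so `S` is a cut. Conversely, if `S`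
separates `x` from `y`, then by 3-edge-connectivity every edge of `S` leaves the component `R` of
`x` in `G - S`, so `∂R = S`. Now `∂R` and `∂X` contain the same tree edges, and a vertex set is
determined up to complement by the tree edges leaving it, so `∂R = ∂X`; hence `K ⊆ S`, and `K`,
which has no tree edges, is empty.
-/

open scoped symmDiff

lemma Set.eq_union_and_disjoint_iff_symmDiff_eq_empty {α : Type*} {A B C : Set α}
    (h : A ∩ C ⊆ B) : (B = A ∪ C ∧ Disjoint A C) ↔ A ∆ B ∆ C = ∅ := by
  simp only [Set.ext_iff, Set.disjoint_left, Set.mem_symmDiff, Set.mem_union,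
    Set.mem_empty_iff_false, iff_false]
  have h' : ∀ x, x ∈ A → x ∈ C → x ∈ B := fun x ha hc => h ⟨ha, hc⟩
  grind

def edgeBoundary (ends : E → V × V) (X : Set V) : Set E :=
  {e | ¬((ends e).1 ∈ X ↔ (ends e).2 ∈ X)}

section EdgeBoundary

variable {ends : E → V × V}

lemma edgeBoundary_symmDiff (X Y : Set V) :
    edgeBoundary ends (X ∆ Y) = edgeBoundary ends X ∆ edgeBoundary ends Y := by
  ext e
  simp only [edgeBoundary, Set.mem_ofPred_eq, Set.mem_symmDiff]
  tauto

lemma Reach.mem_iff_mem {S : Set E} {X : Set V} {a b : V} (h : Reach ends S a b)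
    (hX : edgeBoundary ends X ⊆ S) : a ∈ X ↔ b ∈ X := by
  induction h with
  | refl => rfl
  | tail _ hstep ih =>
    obtain ⟨e, heS, hends | hends⟩ := hstep
    all_goals
      have he : e ∉ edgeBoundary ends X := fun h => heS (hX h)
      simp only [edgeBoundary, Set.mem_ofPred_eq, not_not, hends] at he
      rw [ih, he]

lemma edgeBoundary_reachSet_subset (S : Set E) (x : V) :
    edgeBoundary ends {z | Reach ends S x z} ⊆ S := by
  intro e he
  by_contra heS
  exact he ⟨fun h => h.tail ⟨e, heS, .inl rfl⟩, fun h => h.tail ⟨e, heS, .inr rfl⟩⟩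

/-- An edge of `F` that does not leave the component of `x` could be dropped from the cut `F`,
contradicting `k`-edge-connectivity. -/
lemma edgeBoundary_reachSet_eq {k : ℕ} (hk : GraphKConn ends k) {F : Finset E} (hF : F.card ≤ k)
    {x y : V} (hxy : ¬ Reach ends F x y) : edgeBoundary ends {z | Reach ends F x z} = F := by
  classical
  refine (edgeBoundary_reachSet_subset _ x).antisymm fun e he hcross => hxy ?_
  have hsub : edgeBoundary ends {z | Reach ends F x z} ⊆ ↑(F.erase e) := fun f hf => by
    have hfe : f ≠ e := by rintro rfl; exact hf hcross
    exact Finset.mem_erase.mpr ⟨hfe, edgeBoundary_reachSet_subset _ x hf⟩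
  have hreach := hk _ ((Finset.card_erase_lt_of_mem he).trans_le hF) x y
  exact (hreach.mem_iff_mem hsub).mp .refl

end EdgeBoundary

namespace DFSTree

variable {t : DFSTree V E}

def subtree (t : DFSTree V E) (x : V) : Set V := {z | t.Anc x z}

lemma anc_refl (a : V) : t.Anc a a := .refl

lemma anc_trans {a b c : V} (hab : t.Anc a b) (hbc : t.Anc b c) : t.Anc a c := hbc.trans hab

lemma anc_parent {x : V} (hx : x ≠ t.root) : t.Anc (t.parent x) x := .single ⟨hx, rfl⟩

lemma anc_of_anc_parent {a x : V} (hx : x ≠ t.root) (h : t.Anc a (t.parent x)) : t.Anc a x :=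
  anc_trans h (anc_parent hx)

lemma anc_parent_of_anc {a x : V} (h : t.Anc a x) (hne : x ≠ a) : t.Anc a (t.parent x) := by
  rcases Relation.ReflTransGen.cases_head h with rfl | ⟨y, ⟨-, rfl⟩, h'⟩
  · exact absurd rfl hne
  · exact h'

lemma eq_root_of_anc_root {a : V} (h : t.Anc a t.root) : a = t.root := by
  rcases Relation.ReflTransGen.cases_head h with h | ⟨y, ⟨hr, -⟩, -⟩
  · exact h.symm
  · exact absurd rfl hr

lemma anc_total {a b x : V} (ha : t.Anc a x) (hb : t.Anc b x) : t.Anc a b ∨ t.Anc b a := by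
  induction hb with
  | refl => exact .inl ha
  | tail _ hstep ih =>
    rcases ih with ih | ih
    · rcases Relation.ReflTransGen.cases_head ih with rfl | ⟨y, ⟨-, rfl⟩, h'⟩
      · exact .inr (.single hstep)
      · obtain ⟨-, rfl⟩ := hstep
        exact .inl h'
    · exact .inr (ih.tail hstep)

namespace IsDFS

lemma anc_antisymm (ht : t.IsDFS) {a b : V} (hab : t.Anc a b) (hba : t.Anc b a) : a = b :=
  ht.pre_inj ((ht.pre_mono a b hab).antisymm (ht.pre_mono b a hba))

lemma anc_root (ht : t.IsDFS) (z : V) : t.Anc t.root z := by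
  induction ht.conn t.root z with
  | refl => exact anc_refl _
  | tail _ hstep ih =>
    obtain ⟨e, -, hends⟩ := hstep
    by_cases hte : t.IsTreeEdge e
    · obtain ⟨x, hx, rfl⟩ := hte
      rw [ht.tree_ends x hx, Prod.mk.injEq, Prod.mk.injEq] at hends
      rcases hends with ⟨rfl, rfl⟩ | ⟨rfl, rfl⟩
      · exact anc_parent_of_anc ih hx
      · exact anc_of_anc_parent hx ih
    · have hback := ht.back e hte
      rcases hends with hends | hends <;> rw [hends] at hback
      · rcases anc_total ih hback with h | h
        · exact h
        · exact eq_root_of_anc_root h ▸ anc_refl _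
      · exact anc_trans ih hback

/-- Iterating `parent` from `x` reaches the root, so `x` is not a fixed point of `parent`. -/
lemma not_anc_parent (ht : t.IsDFS) {x : V} (hx : x ≠ t.root) : ¬ t.Anc x (t.parent x) := by
  intro h
  have hfix : t.parent x = x := ht.anc_antisymm (anc_parent hx) h
  suffices ∀ z, t.Anc t.root z → z = x → x = t.root from hx (this x (ht.anc_root x) rfl)
  intro z hz
  induction hz using Relation.ReflTransGen.head_induction_on with
  | refl => exact fun h => h.symm
  | head hstep _ ih =>
    obtain ⟨-, rfl⟩ := hstep
    rintro rfl
    exact ih hfix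

lemma treeEdge_mem_edgeBoundary_subtree_iff (ht : t.IsDFS) {x : V} (hx : x ≠ t.root)
    (y : V) : t.treeEdge x ∈ edgeBoundary t.ends (t.subtree y) ↔ x = y := by
  simp only [edgeBoundary, subtree, Set.mem_ofPred_eq, ht.tree_ends x hx]
  by_cases hxy : x = y
  · subst hxy
    exact iff_of_true (fun h => ht.not_anc_parent hx (h.mp (anc_refl x))) rfl
  · exact iff_of_false
      (not_not.mpr ⟨fun h => anc_parent_of_anc h hxy, anc_of_anc_parent hx⟩) hxy

/-- Non-tree edges join a vertex to one of its ancestors. -/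
lemma mem_B_iff_mem_edgeBoundary (ht : t.IsDFS) {e : E} (hte : ¬ t.IsTreeEdge e) (x : V) :
    e ∈ t.B x ↔ e ∈ edgeBoundary t.ends (t.subtree x) := by
  have hback := ht.back e hte
  simp only [B, ProperAnc, edgeBoundary, subtree, Set.mem_ofPred_eq]
  constructor
  · rintro ⟨-, hxa, hbx, hne⟩ h
    exact hne (ht.anc_antisymm hbx (h.mp hxa))
  · intro h
    have hxb : ¬ t.Anc x (t.ends e).2 := fun hxb => h (iff_of_true (anc_trans hxb hback) hxb)
    have hxa : t.Anc x (t.ends e).1 := by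
      by_contra hxa
      exact h (iff_of_false hxa hxb)
    refine ⟨hte, hxa, (anc_total hback hxa).resolve_right hxb, ?_⟩
    rintro hbx
    rw [hbx] at hxb
    exact hxb (anc_refl x)

lemma edgeBoundary_subtree (ht : t.IsDFS) {x : V} (hx : x ≠ t.root) :
    edgeBoundary t.ends (t.subtree x) = insert (t.treeEdge x) (t.B x) := by
  ext e
  rw [Set.mem_insert_iff]
  by_cases hte : t.IsTreeEdge e
  · obtain ⟨y, hy, rfl⟩ := hte
    rw [ht.treeEdge_mem_edgeBoundary_subtree_iff hy, or_iff_left fun h => h.1 ⟨y, hy, rfl⟩]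
    exact ⟨fun h => h ▸ rfl, ht.treeEdge_inj y x hy hx⟩
  · rw [ht.mem_B_iff_mem_edgeBoundary hte, or_iff_right fun h => hte ⟨x, hx, h⟩]

lemma edgeBoundary_eq_empty_of_forall_treeEdge (ht : t.IsDFS) {Y : Set V}
    (hY : ∀ x, x ≠ t.root → t.treeEdge x ∉ edgeBoundary t.ends Y) :
    edgeBoundary t.ends Y = ∅ := by
  have hroot : ∀ z, z ∈ Y ↔ t.root ∈ Y := fun z => by
    induction ht.anc_root z using Relation.ReflTransGen.head_induction_on with
    | refl => rfl
    | head hstep _ ih =>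
      obtain ⟨hz, rfl⟩ := hstep
      have h := hY _ hz
      simp only [edgeBoundary, Set.mem_ofPred_eq, not_not, ht.tree_ends _ hz] at h
      rw [h, ih]
  exact Set.eq_empty_of_forall_notMem fun e he => he ((hroot _).trans (hroot _).symm)

lemma edgeBoundary_eq_of_forall_treeEdge (ht : t.IsDFS) {Y Z : Set V}
    (h : ∀ x, x ≠ t.root → (t.treeEdge x ∈ edgeBoundary t.ends Y ↔
      t.treeEdge x ∈ edgeBoundary t.ends Z)) :
    edgeBoundary t.ends Y = edgeBoundary t.ends Z := by
  rw [← Set.symmDiff_eq_empty, ← edgeBoundary_symmDiff]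
  refine ht.edgeBoundary_eq_empty_of_forall_treeEdge fun x hx => ?_
  rw [edgeBoundary_symmDiff, Set.mem_symmDiff, h x hx]
  tauto

lemma edgeBoundary_symmDiff_subtree (ht : t.IsDFS) {u v w : V}
    (hu : u ≠ t.root) (hv : v ≠ t.root) (hw : w ≠ t.root)
    (huv : u ≠ v) (hvw : v ≠ w) (huw : u ≠ w) :
    edgeBoundary t.ends (t.subtree u ∆ t.subtree v ∆ t.subtree w) =
      {t.treeEdge u, t.treeEdge v, t.treeEdge w} ∪ (t.B u ∆ t.B v ∆ t.B w) := by
  ext e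
  simp only [edgeBoundary_symmDiff, ht.edgeBoundary_subtree hu, ht.edgeBoundary_subtree hv,
    ht.edgeBoundary_subtree hw, Set.mem_symmDiff, Set.mem_union, Set.mem_insert_iff,
    Set.mem_singleton_iff]
  by_cases hte : t.IsTreeEdge e
  · obtain ⟨y, hy, rfl⟩ := hte
    have hB : ∀ x, t.treeEdge y ∉ t.B x := fun x h => h.1 ⟨y, hy, rfl⟩
    have hinj : ∀ x, x ≠ t.root → (t.treeEdge y = t.treeEdge x ↔ y = x) :=
      fun x hx => ⟨ht.treeEdge_inj y x hy hx, fun h => h ▸ rfl⟩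
    simp only [hB, hinj u hu, hinj v hv, hinj w hw]
    grind
  · have hS : ∀ x, x ≠ t.root → e ≠ t.treeEdge x := fun x hx h => hte ⟨x, hx, h⟩
    simp only [hS u hu, hS v hv, hS w hw]
    tauto

lemma B_inter_subset (ht : t.IsDFS) {u v w : V} (hvw : v ≠ w) (hvu : t.Anc v u)
    (hwv : t.Anc w v) : t.B u ∩ t.B w ⊆ t.B v := by
  rintro e ⟨⟨hte, hua, -⟩, ⟨-, -, hbw, hne⟩⟩
  refine ⟨hte, anc_trans hvu hua, anc_trans hbw hwv, ?_⟩
  rintro rfl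
  exact hvw (ht.anc_antisymm hbw hwv)

end IsDFS

end DFSTree

/-- Let `u` be a descendant of `v` and `v` a descendant of `w` (all distinct, `≠ r`).
Then `{(u, p(u)), (v, p(v)), (w, p(w))}` is a 3-edge cut iff `B(v) = B(u) ⊔ B(w)`. -/
theorem cut_three_tree_edges_nested (t : DFSTree V E) (ht : t.IsDFS)
    (h3 : GraphKConn t.ends 3) (u v w : V)
    (hu : u ≠ t.root) (hv : v ≠ t.root) (hw : w ≠ t.root)
    (huv : u ≠ v) (hvw : v ≠ w) (huw : u ≠ w)
    (hvu : t.Anc v u) (hwv : t.Anc w v) :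
    IsCutSet t.ends {t.treeEdge u, t.treeEdge v, t.treeEdge w} ↔
      (t.B v = t.B u ∪ t.B w ∧ Disjoint (t.B u) (t.B w)) := by
  classical
  rw [Set.eq_union_and_disjoint_iff_symmDiff_eq_empty (ht.B_inter_subset hvw hvu hwv)]
  set S : Set E := {t.treeEdge u, t.treeEdge v, t.treeEdge w}
  set X := t.subtree u ∆ t.subtree v ∆ t.subtree w
  set K := t.B u ∆ t.B v ∆ t.B w
  have hX : edgeBoundary t.ends X = S ∪ K := ht.edgeBoundary_symmDiff_subtree hu hv hw huv hvw huw
  have hK_nonTree : ∀ e ∈ K, ¬ t.IsTreeEdge e := by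
    rintro e (⟨⟨h, -⟩ | ⟨h, -⟩, -⟩ | ⟨h, -⟩) <;> exact h.1
  constructor
  · rintro ⟨x, y, hxy⟩
    have hR : edgeBoundary t.ends {z | Reach t.ends S x z} = S := by
      have h := edgeBoundary_reachSet_eq h3 (Finset.card_le_three (a := t.treeEdge u)
        (b := t.treeEdge v) (c := t.treeEdge w)) (x := x) (y := y)
      push_cast at h
      exact h hxy
    have hRX := ht.edgeBoundary_eq_of_forall_treeEdge (Z := X) fun z hz => by
      rw [hR, hX, Set.mem_union, or_iff_left fun h => hK_nonTree _ h ⟨z, hz, rfl⟩]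
    rw [hR, hX, eq_comm, Set.union_eq_left] at hRX
    refine Set.eq_empty_of_forall_notMem fun e he => hK_nonTree e he ?_
    rcases hRX he with rfl | rfl | rfl
    exacts [⟨u, hu, rfl⟩, ⟨v, hv, rfl⟩, ⟨w, hw, rfl⟩]
  · intro hK
    refine ⟨v, w, fun hreach => ?_⟩
    have hXS : edgeBoundary t.ends X ⊆ S := by rw [hX, hK, Set.union_empty]
    have hnuv : ¬ t.Anc u v := fun h => huv (ht.anc_antisymm h hvu)
    have hnvw : ¬ t.Anc v w := fun h => hvw (ht.anc_antisymm h hwv)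
    have hnuw : ¬ t.Anc u w := fun h => huw (ht.anc_antisymm h (DFSTree.anc_trans hwv hvu))
    have hvX : v ∉ X := by
      simp [X, DFSTree.subtree, Set.mem_symmDiff, DFSTree.anc_refl, hwv, hnuv]
    have hwX : w ∈ X := by
      simp [X, DFSTree.subtree, Set.mem_symmDiff, DFSTree.anc_refl, hnvw, hnuw]
    exact hvX ((hreach.mem_iff_mem hXS).mpr hwX)
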